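/- For every pair of integers (d, w), the 𝔽_p-dimension of the bidegree-(d, w) homogeneous component of K equals the number of pairs (S, k) with S ⊆ {0, 1, …, n−1}, k an integer ≥ 0 whose remainder modulo p^{n+1} is at most p^n − 1, such that Σ_{i∈S}(2p^i − 1) + 2k = d and −|S| = w. -/

import Mathlib

/-- Index of the monomial basis `ε_S μ^k` of `A = 𝔽_p[μ] ⊗ Λ(ε_0, …, ε_n)`. -/
abbrev Idx (n : ℕ) := Finset (Fin (n + 1)) × ℕ

/-- The underlying `𝔽_p`-vector space of `A = 𝔽_p[μ] ⊗ Λ(ε_0, …, ε_n)`,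
with basis the monomials `ε_S μ^k`. -/
abbrev A (p n : ℕ) := Idx n →₀ ZMod p

/-- The monomial `μ^k`. -/
noncomputable def mup (p n k : ℕ) : A p n :=
  Finsupp.single ((∅ : Finset (Fin (n + 1))), k) (1 : ZMod p)

/-- Koszul sign occurring when multiplying `ε_S` by `ε_T`: `(−1)^{#{(s,t) ∈ S×T : t < s}}`. -/
noncomputable def msign (p n : ℕ) (S T : Finset (Fin (n + 1))) : ZMod p :=
  (-1 : ZMod p) ^ ((S ×ˢ T).filter (fun st => st.2 < st.1)).card

/-- Product of two basis monomials of `A`. -/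
noncomputable def mulB (p n : ℕ) (b c : Idx n) : A p n :=
  if Disjoint b.1 c.1 then
    msign p n b.1 c.1 • Finsupp.single (b.1 ∪ c.1, b.2 + c.2) (1 : ZMod p)
  else 0

/-- The graded-commutative multiplication of `A`, extended bilinearly from monomials. -/
noncomputable def mul (p n : ℕ) (x y : A p n) : A p n :=
  x.sum fun b a => y.sum fun c d => (a * d) • mulB p n b c

/-- The `σ` operator: the `𝔽_p[μ]`-linear graded derivation with `σ(ε_i) = μ^{p^i}`,
given on a basis monomial `ε_{i₁}⋯ε_{i_m} μ^k` (with `i₁ < ⋯ < i_m`) by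
`Σ_j (−1)^{j−1} ε_{i₁}⋯ε_{i_{j−1}} ε_{i_{j+1}}⋯ε_{i_m} μ^{k + p^{i_j}}`. -/
noncomputable def sigma (p n : ℕ) : A p n →ₗ[ZMod p] A p n :=
  Finsupp.lsum (ZMod p) fun b =>
    LinearMap.toSpanSingleton (ZMod p) (A p n)
      (∑ s ∈ b.1, ((-1 : ZMod p) ^ (b.1.filter (· < s)).card) •
        Finsupp.single (b.1.erase s, b.2 + p ^ (s : ℕ)) (1 : ZMod p))

/-- The cap product operator `− ∩ c_m`, with `(ε_S μ^j) ∩ c_m = C(j, m)·ε_S μ^{j−m}`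
(zero when `j < m`, since then `C(j, m) = 0`). -/
noncomputable def cap (p n m : ℕ) : A p n →ₗ[ZMod p] A p n :=
  Finsupp.lsum (ZMod p) fun b =>
    LinearMap.toSpanSingleton (ZMod p) (A p n)
      ((Nat.choose b.2 m : ZMod p) • Finsupp.single (b.1, b.2 - m) (1 : ZMod p))

open Fin.NatCast in
/-- `ε̄_i := ε_i − μ^{p^i − p^{i−1}} ε_{i−1}`. -/
noncomputable def ebar (p n : ℕ) (i : ℕ) : A p n :=
  Finsupp.single (({(i : Fin (n + 1))} : Finset (Fin (n + 1))), 0) (1 : ZMod p)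
    - Finsupp.single (({((i - 1 : ℕ) : Fin (n + 1))} : Finset (Fin (n + 1))),
        p ^ i - p ^ (i - 1)) (1 : ZMod p)

/-- `ε̄_S`: the product of the `ε̄_s` for `s ∈ S`, taken in increasing order of `s`
(with `ε̄_∅ = 1`). -/
noncomputable def ebarProd (p n : ℕ) (S : Finset ℕ) : A p n :=
  (S.sort (· ≤ ·)).foldr (fun s acc => mul p n (ebar p n s) acc) (mup p n 0)

/-- The (topological) degree of the basis monomial `ε_S μ^k`: `Σ_{i∈S} (2p^i − 1) + 2k`. -/
noncomputable def degIdx (p n : ℕ) (b : Idx n) : ℤ :=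
  (∑ i ∈ b.1, (2 * (p : ℤ) ^ (i : ℕ) - 1)) + 2 * (b.2 : ℤ)

/-- The Adams weight of the basis monomial `ε_S μ^k`: `−|S|`. -/
noncomputable def wtIdx (n : ℕ) (b : Idx n) : ℤ := -(b.1.card : ℤ)

/-- The bidegree-`(d, w)` homogeneous component of `A`: the span of the basis monomials
of degree `d` and Adams weight `w`. -/
noncomputable def Acomp (p n : ℕ) (d w : ℤ) : Submodule (ZMod p) (A p n) :=
  Submodule.span (ZMod p)
    {x | ∃ b : Idx n, degIdx p n b = d ∧ wtIdx n b = w ∧ x = Finsupp.single b (1 : ZMod p)}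

/-- `K`: the intersection of the kernels of `x ↦ x ∩ c_{p^n}` and `x ↦ σ(x) ∩ c_{p^n}`. -/
noncomputable def Kker (p n : ℕ) : Submodule (ZMod p) (A p n) :=
  LinearMap.ker (cap p n (p ^ n)) ⊓ LinearMap.ker ((cap p n (p ^ n)).comp (sigma p n))

section Digits
variable {p n : ℕ}

/-- Lucas corollary: `C(k, p^i) ≡ (k / p^i) % p (mod p)`. -/
lemma lucas_pow (hp : p.Prime) (i k : ℕ) :
    ((Nat.choose k (p ^ i) : ℕ) : ZMod p) = ((k / p ^ i % p : ℕ) : ZMod p) := by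
  haveI := Fact.mk hp
  induction i generalizing k with
  | zero => simp [Nat.choose_one_right, ZMod.natCast_mod]
  | succ i ih =>
    have h := (Choose.choose_modEq_choose_mod_mul_choose_div_nat (p := p)
      (n := k) (k := p ^ (i+1)))
    have h2 : ((Nat.choose k (p ^ (i+1)) : ℕ) : ZMod p)
        = ((Nat.choose (k % p) (p ^ (i+1) % p) * Nat.choose (k / p) (p ^ (i+1) / p) : ℕ) : ZMod p) :=
      (ZMod.natCast_eq_natCast_iff _ _ _).2 h
    have hmod : p ^ (i+1) % p = 0 := by
      rw [pow_succ]; exact Nat.mul_mod_left _ _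
    have hdiv : p ^ (i+1) / p = p ^ i := by
      rw [pow_succ]; exact Nat.mul_div_cancel _ hp.pos
    rw [h2, hmod, hdiv, Nat.choose_zero_right, one_mul, ih,
      Nat.div_div_eq_div_mul, mul_comm p (p ^ i), ← pow_succ]

lemma digit_eq (hp2 : 2 ≤ p) (A r : ℕ) (hr : r < p ^ (n + 1)) :
    (p ^ (n + 1) * A + r) / p ^ n % p = r / p ^ n := by
  have h0 : 0 < p ^ n := Nat.pow_pos (by omega)
  have h1 : p ^ (n + 1) = p ^ n * p := pow_succ p n
  rw [h1, mul_assoc, Nat.mul_add_div h0, Nat.mul_add_mod]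
  have h2 : r / p ^ n < p := by
    rw [Nat.div_lt_iff_lt_mul h0]
    calc r < p ^ n * p := by rw [← h1]; exact hr
    _ = p * p ^ n := mul_comm _ _
  exact Nat.mod_eq_of_lt h2

/-- base-p digit `n` of `k`, expressed via `k % p^(n+1)`. -/
lemma digit_mod (hp2 : 2 ≤ p) (k : ℕ) :
    k / p ^ n % p = k % p ^ (n + 1) / p ^ n := by
  conv_lhs => rw [← Nat.div_add_mod k (p ^ (n + 1))]
  exact digit_eq hp2 _ _ (Nat.mod_lt _ (Nat.pow_pos (by omega)))

lemma good_iff (hp2 : 2 ≤ p) (k : ℕ) :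
    k % p ^ (n + 1) ≤ p ^ n - 1 ↔ k / p ^ n % p = 0 := by
  have h0 : 0 < p ^ n := Nat.pow_pos (by omega)
  rw [digit_mod hp2, Nat.div_eq_zero_iff]
  omega

lemma good_lt (hp2 : 2 ≤ p) {k : ℕ} (h : k / p ^ n % p = 0) :
    k % p ^ (n + 1) < p ^ n := by
  have h0 : 0 < p ^ n := Nat.pow_pos (by omega)
  have := (good_iff hp2 k).2 h
  omega

lemma pow_n1 (hp2 : 2 ≤ p) : p ^ n + p ^ n ≤ p ^ (n + 1) := by
  have := pow_succ p n
  nlinarith [pow_pos (show 0 < p by omega) n]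

lemma f1 (hp2 : 2 ≤ p) {k t : ℕ} (ht : t < n) (hk : k / p ^ n % p = 0)
    (hne : (k + p ^ t) / p ^ n % p ≠ 0) :
    p ^ n ≤ k + p ^ t ∧ (k + p ^ t - p ^ n) / p ^ n % p = 0 := by
  have h0 : 0 < p ^ n := Nat.pow_pos (by omega)
  have hk' : p ^ (n + 1) * (k / p ^ (n + 1)) + k % p ^ (n + 1) = k := Nat.div_add_mod _ _
  set A := k / p ^ (n + 1)
  set r := k % p ^ (n + 1) with hrdef
  have hr : r < p ^ n := good_lt hp2 hk
  have hpt : p ^ t < p ^ n := Nat.pow_lt_pow_right (by omega) ht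
  have hsum := pow_n1 (n := n) hp2
  have hrt : r + p ^ t < p ^ (n + 1) := by omega
  have hD : (k + p ^ t) / p ^ n % p = (r + p ^ t) / p ^ n := by
    rw [← hk', add_assoc]; exact digit_eq hp2 _ _ hrt
  have hge : p ^ n ≤ r + p ^ t := by
    by_contra hlt
    push_neg at hlt
    rw [hD, Nat.div_eq_of_lt hlt] at hne
    exact hne rfl
  refine ⟨by omega, ?_⟩
  have he : k + p ^ t - p ^ n = p ^ (n + 1) * A + (r + p ^ t - p ^ n) := by omega
  rw [he, digit_eq hp2 _ _ (by omega)]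
  exact Nat.div_eq_of_lt (by omega)

lemma f2 (hp2 : 2 ≤ p) {k t t' : ℕ} (ht : t < n) (ht' : t' < n)
    (hk : k / p ^ n % p = 0) (hne : (k + p ^ t) / p ^ n % p ≠ 0) :
    (k + p ^ t - p ^ n + p ^ t') / p ^ n % p = 0 := by
  have h0 : 0 < p ^ n := Nat.pow_pos (by omega)
  have hk' : p ^ (n + 1) * (k / p ^ (n + 1)) + k % p ^ (n + 1) = k := Nat.div_add_mod _ _
  set A := k / p ^ (n + 1)
  set r := k % p ^ (n + 1) with hrdef
  have hr : r < p ^ n := good_lt hp2 hk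
  have hpt : p ^ t ≤ p ^ (n - 1) := Nat.pow_le_pow_right (by omega) (by omega)
  have hpt' : p ^ t' ≤ p ^ (n - 1) := Nat.pow_le_pow_right (by omega) (by omega)
  have hh : p ^ (n - 1) + p ^ (n - 1) ≤ p ^ n := by
    have : p ^ n = p ^ (n - 1) * p := by
      rw [← pow_succ]; congr 1; omega
    nlinarith [pow_pos (show 0 < p by omega) (n - 1)]
  have hsum := pow_n1 (n := n) hp2
  have hrt : r + p ^ t < p ^ (n + 1) := by omega
  have hD : (k + p ^ t) / p ^ n % p = (r + p ^ t) / p ^ n := by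
    rw [← hk', add_assoc]; exact digit_eq hp2 _ _ hrt
  have hge : p ^ n ≤ r + p ^ t := by
    by_contra hlt
    push_neg at hlt
    rw [hD, Nat.div_eq_of_lt hlt] at hne
    exact hne rfl
  have he : k + p ^ t - p ^ n + p ^ t' = p ^ (n + 1) * A + (r + p ^ t - p ^ n + p ^ t') := by
    omega
  rw [he, digit_eq hp2 _ _ (by omega)]
  exact Nat.div_eq_of_lt (by omega)

lemma fd (hp2 : 2 ≤ p) {k : ℕ} (hk : k / p ^ n % p = 0) :
    (k + p ^ n) / p ^ n % p = 1 := by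
  have h0 : 0 < p ^ n := Nat.pow_pos (by omega)
  have hk' : p ^ (n + 1) * (k / p ^ (n + 1)) + k % p ^ (n + 1) = k := Nat.div_add_mod _ _
  set r := k % p ^ (n + 1) with hrdef
  have hr : r < p ^ n := good_lt hp2 hk
  have hsum := pow_n1 (n := n) hp2
  have he : k + p ^ n = p ^ (n + 1) * (k / p ^ (n + 1)) + (r + p ^ n) := by omega
  rw [he, digit_eq hp2 _ _ (by omega), Nat.add_div_right _ h0, Nat.div_eq_of_lt hr]

lemma bad_ge {k : ℕ} (h : k / p ^ n % p ≠ 0) : p ^ n ≤ k := by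
  by_contra hlt
  push_neg at hlt
  rw [Nat.div_eq_of_lt hlt] at h
  exact h rfl

/-- cast of the choose to `ZMod p` vanishes iff the digit vanishes. -/
lemma choose_cast_eq_zero_iff (hp : p.Prime) (k : ℕ) :
    ((Nat.choose k (p ^ n) : ℕ) : ZMod p) = 0 ↔ k / p ^ n % p = 0 := by
  haveI := Fact.mk hp
  rw [lucas_pow hp, ZMod.natCast_eq_zero_iff]
  constructor
  · intro h
    exact Nat.eq_zero_of_dvd_of_lt h (Nat.mod_lt _ hp.pos)
  · rintro h; rw [h]; exact dvd_zero p

end Digits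

section Eval
variable {p n : ℕ}

lemma cap_single (m : ℕ) (b : Idx n) :
    cap p n m (Finsupp.single b (1 : ZMod p)) =
      (Nat.choose b.2 m : ZMod p) • Finsupp.single (b.1, b.2 - m) (1 : ZMod p) := by
  rw [cap, Finsupp.lsum_single, LinearMap.toSpanSingleton_apply, one_smul]

lemma sigma_single (b : Idx n) :
    sigma p n (Finsupp.single b (1 : ZMod p)) =
      ∑ s ∈ b.1, ((-1 : ZMod p) ^ (b.1.filter (· < s)).card) •
        Finsupp.single (b.1.erase s, b.2 + p ^ (s : ℕ)) (1 : ZMod p) := by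
  rw [sigma, Finsupp.lsum_single, LinearMap.toSpanSingleton_apply, one_smul]

lemma capsigma_single (m : ℕ) (b : Idx n) :
    cap p n m (sigma p n (Finsupp.single b (1 : ZMod p))) =
      ∑ s ∈ b.1, (((-1 : ZMod p) ^ (b.1.filter (· < s)).card) *
          (Nat.choose (b.2 + p ^ (s : ℕ)) m : ZMod p)) •
        Finsupp.single (b.1.erase s, b.2 + p ^ (s : ℕ) - m) (1 : ZMod p) := by
  rw [sigma_single, map_sum]
  refine Finset.sum_congr rfl fun s _ => ?_
  rw [map_smul, cap_single, smul_smul]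

lemma cap_apply_eq (m : ℕ) (x : A p n) (c₀ : Idx n) :
    (cap p n m x) c₀ = ∑ b ∈ x.support,
      x b * (Nat.choose b.2 m : ZMod p) *
        (if (b.1, b.2 - m) = c₀ then (1 : ZMod p) else 0) := by
  conv_lhs => rw [← Finsupp.sum_single x]
  rw [map_finsuppSum, Finsupp.sum_apply, Finsupp.sum]
  refine Finset.sum_congr rfl fun b _ => ?_
  have : Finsupp.single b (x b) = (x b) • Finsupp.single b (1 : ZMod p) := by
    rw [Finsupp.smul_single, smul_eq_mul, mul_one]
  rw [this, map_smul, cap_single, Finsupp.smul_apply, Finsupp.smul_apply,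
    Finsupp.single_apply, smul_eq_mul, smul_eq_mul]
  ring

lemma capsigma_apply_eq (m : ℕ) (x : A p n) (c₀ : Idx n) :
    (cap p n m (sigma p n x)) c₀ = ∑ b ∈ x.support,
      x b * ∑ s ∈ b.1, (((-1 : ZMod p) ^ (b.1.filter (· < s)).card) *
          (Nat.choose (b.2 + p ^ (s : ℕ)) m : ZMod p) *
        (if (b.1.erase s, b.2 + p ^ (s : ℕ) - m) = c₀ then (1 : ZMod p) else 0)) := by
  conv_lhs => rw [← Finsupp.sum_single x]
  rw [map_finsuppSum, map_finsuppSum, Finsupp.sum_apply, Finsupp.sum]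
  refine Finset.sum_congr rfl fun b _ => ?_
  have : Finsupp.single b (x b) = (x b) • Finsupp.single b (1 : ZMod p) := by
    rw [Finsupp.smul_single, smul_eq_mul, mul_one]
  rw [this, map_smul, map_smul, capsigma_single, Finsupp.smul_apply,
    Finsupp.finset_sum_apply, smul_eq_mul]
  refine congrArg (x b * ·) (Finset.sum_congr rfl fun s _ => ?_)
  rw [Finsupp.smul_apply, Finsupp.single_apply, smul_eq_mul]

end Eval

section Comp
variable {p n : ℕ} {d w : ℤ}

lemma comp_snd_eq {b b' : Idx n} (h : degIdx p n b = degIdx p n b') (h1 : b.1 = b'.1) :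
    b.2 = b'.2 := by
  unfold degIdx at h
  rw [h1] at h
  have : (b.2 : ℤ) = b'.2 := by linarith
  exact_mod_cast this

lemma mem_Acomp_support (hp : p.Prime) {x : A p n} (hx : x ∈ Acomp p n d w) {b : Idx n} (hb : x b ≠ 0) :
    degIdx p n b = d ∧ wtIdx n b = w := by
  haveI := Fact.mk hp
  have hsub : Acomp p n d w ≤ Finsupp.supported (ZMod p) (ZMod p)
      {b : Idx n | degIdx p n b = d ∧ wtIdx n b = w} := by
    rw [Acomp, Submodule.span_le]
    rintro y ⟨b, hdeg, hwt, rfl⟩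
    rw [SetLike.mem_coe, Finsupp.mem_supported, Finsupp.support_single_ne_zero _ one_ne_zero]
    simpa using ⟨hdeg, hwt⟩
  have h2 := hsub hx
  rw [Finsupp.mem_supported] at h2
  exact h2 (Finsupp.mem_support_iff.2 hb)

lemma erase_eq_erase {α : Type*} [DecidableEq α] {a : α} {s t : Finset α}
    (ha : a ∈ s) (hb : a ∈ t) (h : s.erase a = t.erase a) : s = t := by
  rw [← Finset.insert_erase ha, h, Finset.insert_erase hb]

lemma key_inj (hp : p.Prime) {x : A p n}
    (hx : x ∈ Kker p n ⊓ Acomp p n d w)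
    (h0 : ∀ b : Idx n, (∀ i ∈ b.1, (i : ℕ) < n) → b.2 / p ^ n % p = 0 →
      degIdx p n b = d → wtIdx n b = w → x b = 0) :
    x = 0 := by
  haveI := Fact.mk hp
  have hp2 := hp.two_le
  obtain ⟨⟨hc, hcs⟩, hA⟩ := hx
  rw [SetLike.mem_coe, LinearMap.mem_ker] at hc
  rw [SetLike.mem_coe, LinearMap.mem_ker, LinearMap.comp_apply] at hcs
  -- Step 1: coordinates with nonzero n-th digit vanish
  have hbad : ∀ b : Idx n, b.2 / p ^ n % p ≠ 0 → x b = 0 := by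
    intro b hb
    by_contra hxb
    have hbc := mem_Acomp_support hp hA hxb
    have hz := congrArg (fun y : A p n => y (b.1, b.2 - p ^ n)) hc
    simp only [Finsupp.coe_zero, Pi.zero_apply] at hz
    rw [cap_apply_eq] at hz
    have hsum : (∑ b' ∈ x.support,
        x b' * (Nat.choose b'.2 (p ^ n) : ZMod p) *
          (if (b'.1, b'.2 - p ^ n) = (b.1, b.2 - p ^ n) then (1 : ZMod p) else 0))
        = x b * (Nat.choose b.2 (p ^ n) : ZMod p) *
          (if ((b.1, b.2 - p ^ n) : Idx n) = (b.1, b.2 - p ^ n) then (1 : ZMod p) else 0) := by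
      refine Finset.sum_eq_single b ?_ ?_
      · intro b' hb' hne
        rcases eq_or_ne ((b'.1, b'.2 - p ^ n) : Idx n) (b.1, b.2 - p ^ n) with he | he
        · exfalso
          have h1 : b'.1 = b.1 := (Prod.ext_iff.1 he).1
          have hbc' := mem_Acomp_support hp hA (Finsupp.mem_support_iff.1 hb')
          exact hne (Prod.ext h1 (comp_snd_eq (by rw [hbc'.1, hbc.1]) h1))
        · rw [if_neg he, mul_zero]
      · intro hb'
        rw [Finsupp.notMem_support_iff.1 hb', zero_mul, zero_mul]
    rw [hsum, if_pos rfl, mul_one] at hz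
    rcases mul_eq_zero.1 hz with h | h
    · exact hxb h
    · exact hb ((choose_cast_eq_zero_iff hp _).1 h)
  -- Step 3: coordinates containing `last` vanish
  have hlast : ∀ b : Idx n, Fin.last n ∈ b.1 → x b = 0 := by
    intro b hbl
    by_cases hD : b.2 / p ^ n % p = 0
    swap
    · exact hbad b hD
    by_contra hxb
    have hbc := mem_Acomp_support hp hA hxb
    have hz := congrArg (fun y : A p n => y (b.1.erase (Fin.last n), b.2)) hcs
    simp only [Finsupp.coe_zero, Pi.zero_apply] at hz
    rw [capsigma_apply_eq] at hz
    set c₀ : Idx n := (b.1.erase (Fin.last n), b.2) with hc₀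
    have hinner : ∀ b' : Idx n, degIdx p n b' = d → Fin.last n ∈ b'.1 → b' ≠ b →
        (∑ s ∈ b'.1, (((-1 : ZMod p) ^ (b'.1.filter (· < s)).card) *
          (Nat.choose (b'.2 + p ^ (s : ℕ)) (p ^ n) : ZMod p) *
          (if ((b'.1.erase s, b'.2 + p ^ (s : ℕ) - p ^ n) : Idx n) = c₀
            then (1 : ZMod p) else 0))) = 0 := by
      intro b' hdeg' hl' hne
      refine Finset.sum_eq_zero fun s hs => ?_
      rcases eq_or_ne s (Fin.last n) with rfl | hsne
      · rcases eq_or_ne ((b'.1.erase (Fin.last n), b'.2 + p ^ ((Fin.last n : Fin (n + 1)) : ℕ)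
            - p ^ n) : Idx n) c₀ with he | he
        · exfalso
          have h1 : b'.1 = b.1 :=
            erase_eq_erase hl' hbl (Prod.ext_iff.1 he).1
          exact hne (Prod.ext h1 (comp_snd_eq (by rw [hdeg', hbc.1]) h1))
        · rw [if_neg he, mul_zero]
      · have he : ((b'.1.erase s, b'.2 + p ^ (s : ℕ) - p ^ n) : Idx n) ≠ c₀ := by
          intro he
          have h1 : Fin.last n ∈ b'.1.erase s := Finset.mem_erase.2 ⟨Ne.symm hsne, hl'⟩
          have h2 : b'.1.erase s = b.1.erase (Fin.last n) := (Prod.ext_iff.1 he).1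
          rw [h2] at h1
          exact Finset.notMem_erase _ _ h1
        rw [if_neg he, mul_zero]
    have hsum : (∑ b' ∈ x.support, x b' * ∑ s ∈ b'.1,
        (((-1 : ZMod p) ^ (b'.1.filter (· < s)).card) *
          (Nat.choose (b'.2 + p ^ (s : ℕ)) (p ^ n) : ZMod p) *
          (if ((b'.1.erase s, b'.2 + p ^ (s : ℕ) - p ^ n) : Idx n) = c₀
            then (1 : ZMod p) else 0)))
        = x b * ∑ s ∈ b.1,
        (((-1 : ZMod p) ^ (b.1.filter (· < s)).card) *
          (Nat.choose (b.2 + p ^ (s : ℕ)) (p ^ n) : ZMod p) *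
          (if ((b.1.erase s, b.2 + p ^ (s : ℕ) - p ^ n) : Idx n) = c₀
            then (1 : ZMod p) else 0)) := by
      refine Finset.sum_eq_single b ?_ ?_
      · intro b' hb' hne
        by_cases hx' : x b' = 0
        · rw [hx', zero_mul]
        have hbc' := mem_Acomp_support hp hA hx'
        by_cases hD' : b'.2 / p ^ n % p = 0
        swap
        · rw [hbad b' hD', zero_mul]
        by_cases hl' : Fin.last n ∈ b'.1
        · rw [hinner b' hbc'.1 hl' hne, mul_zero]
        · exact absurd (h0 b' (fun i hi => Fin.val_lt_last (fun hh => hl' (hh ▸ hi)))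
            hD' hbc'.1 hbc'.2) hx'
      · intro hb'
        rw [Finsupp.notMem_support_iff.1 hb', zero_mul]
    rw [hsum] at hz
    have hsum2 : (∑ s ∈ b.1,
        (((-1 : ZMod p) ^ (b.1.filter (· < s)).card) *
          (Nat.choose (b.2 + p ^ (s : ℕ)) (p ^ n) : ZMod p) *
          (if ((b.1.erase s, b.2 + p ^ (s : ℕ) - p ^ n) : Idx n) = c₀
            then (1 : ZMod p) else 0)))
        = ((-1 : ZMod p) ^ (b.1.filter (· < Fin.last n)).card) *
          (Nat.choose (b.2 + p ^ n) (p ^ n) : ZMod p) := by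
      refine (Finset.sum_eq_single (Fin.last n) ?_ ?_).trans ?_
      · intro s hs hsne
        have he : ((b.1.erase s, b.2 + p ^ (s : ℕ) - p ^ n) : Idx n) ≠ c₀ := by
          intro he
          have h1 : Fin.last n ∈ b.1.erase s := Finset.mem_erase.2 ⟨Ne.symm hsne, hbl⟩
          have h2 : b.1.erase s = b.1.erase (Fin.last n) := (Prod.ext_iff.1 he).1
          rw [h2] at h1
          exact Finset.notMem_erase _ _ h1
        rw [if_neg he, mul_zero]
      · intro h
        exact absurd hbl h
      · have hidx : ((b.1.erase (Fin.last n), b.2 + p ^ ((Fin.last n : Fin (n + 1)) : ℕ)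
            - p ^ n) : Idx n) = c₀ := by
          rw [hc₀]
          simp [Fin.val_last]
        rw [if_pos hidx, mul_one, Fin.val_last]
    rw [hsum2] at hz
    rcases mul_eq_zero.1 hz with h | h
    · exact hxb h
    rcases mul_eq_zero.1 h with h' | h'
    · exact pow_ne_zero _ (neg_ne_zero.2 (one_ne_zero)) h'
    · have hC : ((Nat.choose (b.2 + p ^ n) (p ^ n) : ℕ) : ZMod p) = ((1 : ℕ) : ZMod p) := by
        rw [lucas_pow hp, fd hp2 hD]
      rw [hC, Nat.cast_one] at h'
      exact one_ne_zero h'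
  -- conclusion
  ext b
  rw [Finsupp.coe_zero, Pi.zero_apply]
  by_contra hxb
  have hbc := mem_Acomp_support hp hA hxb
  by_cases hD : b.2 / p ^ n % p = 0
  swap
  · exact hxb (hbad b hD)
  by_cases hl : Fin.last n ∈ b.1
  · exact hxb (hlast b hl)
  · exact hxb (h0 b (fun i hi => Fin.val_lt_last (fun hh => hl (hh ▸ hi))) hD hbc.1 hbc.2)

end Comp

section Constr
variable {p n : ℕ}

/-- The candidate kernel element attached to a good monomial `b` with `b.1 ⊆ {0,…,n−1}`. -/
noncomputable def xg (p n : ℕ) (b : Idx n) : A p n :=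
  Finsupp.single b (1 : ZMod p) +
    ∑ t ∈ b.1.filter (fun t : Fin (n + 1) => (b.2 + p ^ (t : ℕ)) / p ^ n % p ≠ 0),
      ((-1 : ZMod p) ^ ((b.1.filter (· < t)).card + b.1.card)) •
        Finsupp.single (insert (Fin.last n) (b.1.erase t), b.2 + p ^ (t : ℕ) - p ^ n)
          (1 : ZMod p)

lemma lt_last_of_val_lt {i : Fin (n + 1)} (h : (i : ℕ) < n) : i < Fin.last n := by
  rw [Fin.lt_def, Fin.val_last]; exact h

lemma last_not_mem {E : Finset (Fin (n + 1))} (h : ∀ i ∈ E, (i : ℕ) < n) :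
    Fin.last n ∉ E := fun hm => by simpa using h _ hm

lemma filter_insert_last {E : Finset (Fin (n + 1))} (h : ∀ i ∈ E, (i : ℕ) < n) :
    (insert (Fin.last n) E).filter (· < Fin.last n) = E := by
  ext i
  simp only [Finset.mem_filter, Finset.mem_insert]
  constructor
  · rintro ⟨rfl | hi, hlt⟩
    · exact absurd hlt (lt_irrefl _)
    · exact hi
  · intro hi
    exact ⟨Or.inr hi, lt_last_of_val_lt (h i hi)⟩

lemma xg_cap (hp : p.Prime) {b : Idx n}
    (hlt : ∀ i ∈ b.1, (i : ℕ) < n) (hD : b.2 / p ^ n % p = 0) :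
    cap p n (p ^ n) (xg p n b) = 0 := by
  have hp2 := hp.two_le
  rw [xg, map_add, map_sum]
  have h1 : cap p n (p ^ n) (Finsupp.single b (1 : ZMod p)) = 0 := by
    rw [cap_single, (choose_cast_eq_zero_iff hp _).2 hD, zero_smul]
  rw [h1, zero_add]
  refine Finset.sum_eq_zero fun t ht => ?_
  rw [Finset.mem_filter] at ht
  have hf1 := f1 hp2 (hlt t ht.1) hD ht.2
  rw [map_smul, cap_single]
  rw [show ((insert (Fin.last n) (b.1.erase t), b.2 + p ^ (t : ℕ) - p ^ n) : Idx n).2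
      = b.2 + p ^ (t : ℕ) - p ^ n from rfl,
    (choose_cast_eq_zero_iff hp _).2 hf1.2, zero_smul, smul_zero]

lemma xg_capsigma (hp : p.Prime) {b : Idx n}
    (hlt : ∀ i ∈ b.1, (i : ℕ) < n) (hD : b.2 / p ^ n % p = 0) :
    cap p n (p ^ n) (sigma p n (xg p n b)) = 0 := by
  have hp2 := hp.two_le
  rw [xg, map_add, map_add, map_sum, map_sum]
  set F := b.1.filter (fun t : Fin (n + 1) => (b.2 + p ^ (t : ℕ)) / p ^ n % p ≠ 0) with hF
  -- first piece
  have h1 : cap p n (p ^ n) (sigma p n (Finsupp.single b (1 : ZMod p)))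
      = ∑ t ∈ F, (((-1 : ZMod p) ^ (b.1.filter (· < t)).card) *
          (Nat.choose (b.2 + p ^ (t : ℕ)) (p ^ n) : ZMod p)) •
        Finsupp.single (b.1.erase t, b.2 + p ^ (t : ℕ) - p ^ n) (1 : ZMod p) := by
    rw [capsigma_single]
    refine (Finset.sum_subset (Finset.filter_subset _ _) fun s hs hns => ?_).symm
    rw [Finset.mem_filter, not_and] at hns
    have hDs : (b.2 + p ^ (s : ℕ)) / p ^ n % p = 0 := by
      by_contra hcon
      exact (hns hs) hcon
    rw [(choose_cast_eq_zero_iff hp _).2 hDs, mul_zero, zero_smul]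
  have h2 : ∀ t ∈ F, cap p n (p ^ n) (sigma p n
      (Finsupp.single ((insert (Fin.last n) (b.1.erase t), b.2 + p ^ (t : ℕ) - p ^ n) : Idx n)
        (1 : ZMod p)))
      = (((-1 : ZMod p) ^ (b.1.erase t).card) *
          (Nat.choose (b.2 + p ^ (t : ℕ)) (p ^ n) : ZMod p)) •
        Finsupp.single ((b.1.erase t, b.2 + p ^ (t : ℕ) - p ^ n) : Idx n) (1 : ZMod p) := by
    intro t ht
    rw [hF, Finset.mem_filter] at ht
    have htn : (t : ℕ) < n := hlt t ht.1
    have hf1 := f1 hp2 htn hD ht.2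
    have hE : ∀ i ∈ b.1.erase t, (i : ℕ) < n := fun i hi => hlt i (Finset.mem_of_mem_erase hi)
    have hlm : Fin.last n ∉ b.1.erase t := last_not_mem hE
    rw [capsigma_single]
    rw [show ((insert (Fin.last n) (b.1.erase t), b.2 + p ^ (t : ℕ) - p ^ n) : Idx n).1
        = insert (Fin.last n) (b.1.erase t) from rfl]
    rw [Finset.sum_insert hlm]
    have hz : ∀ s ∈ b.1.erase t,
        ((((-1 : ZMod p) ^ ((insert (Fin.last n) (b.1.erase t)).filter (· < s)).card) *
          (Nat.choose ((b.2 + p ^ (t : ℕ) - p ^ n) + p ^ (s : ℕ)) (p ^ n) : ZMod p)) •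
          Finsupp.single (((insert (Fin.last n) (b.1.erase t)).erase s,
            (b.2 + p ^ (t : ℕ) - p ^ n) + p ^ (s : ℕ) - p ^ n) : Idx n) (1 : ZMod p)) = 0 := by
      intro s hs
      have hDs := f2 hp2 htn (hE s hs) hD ht.2
      rw [(choose_cast_eq_zero_iff hp _).2 hDs, mul_zero, zero_smul]
    rw [Finset.sum_eq_zero hz, add_zero]
    have hfil : (insert (Fin.last n) (b.1.erase t)).filter (· < Fin.last n) = b.1.erase t :=
      filter_insert_last hE
    have hexp : (b.2 + p ^ (t : ℕ) - p ^ n) + p ^ ((Fin.last n : Fin (n + 1)) : ℕ)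
        = b.2 + p ^ (t : ℕ) := by
      rw [Fin.val_last]
      omega
    rw [Finset.erase_insert hlm, hfil, hexp]
  rw [h1, ← Finset.sum_add_distrib]
  refine Finset.sum_eq_zero fun t ht => ?_
  have htm := ht
  rw [hF, Finset.mem_filter] at htm
  rw [map_smul, map_smul, h2 t ht, smul_smul, ← add_smul]
  have hcard : 1 ≤ b.1.card := Finset.card_pos.2 ⟨t, htm.1⟩
  have hkey : ((-1 : ZMod p) ^ (b.1.filter (· < t)).card) *
        (Nat.choose (b.2 + p ^ (t : ℕ)) (p ^ n) : ZMod p) +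
      ((-1 : ZMod p) ^ ((b.1.filter (· < t)).card + b.1.card)) *
        (((-1 : ZMod p) ^ (b.1.erase t).card) *
          (Nat.choose (b.2 + p ^ (t : ℕ)) (p ^ n) : ZMod p)) = 0 := by
    rw [Finset.card_erase_of_mem htm.1]
    have hmix : ((-1 : ZMod p)) ^ ((b.1.filter (· < t)).card + b.1.card) *
        ((-1 : ZMod p)) ^ (b.1.card - 1) = -((-1 : ZMod p) ^ (b.1.filter (· < t)).card) := by
      rw [← pow_add]
      have he : (b.1.filter (· < t)).card + b.1.card + (b.1.card - 1)
          = 2 * (b.1.card - 1) + ((b.1.filter (· < t)).card + 1) := by omega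
      rw [he, pow_add, pow_mul, neg_one_sq, one_pow, one_mul, pow_succ]
      ring
    linear_combination ((Nat.choose (b.2 + p ^ (t : ℕ)) (p ^ n) : ZMod p)) * hmix
  rw [hkey, zero_smul]

end Constr

section Constr2
variable {p n : ℕ}

lemma xg_mem_Acomp (hp : p.Prime) {b : Idx n}
    (hlt : ∀ i ∈ b.1, (i : ℕ) < n) (hD : b.2 / p ^ n % p = 0) :
    xg p n b ∈ Acomp p n (degIdx p n b) (wtIdx n b) := by
  have hp2 := hp.two_le
  refine Submodule.add_mem _ (Submodule.subset_span ⟨b, rfl, rfl, rfl⟩) ?_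
  refine Submodule.sum_mem _ fun t ht => Submodule.smul_mem _ _ (Submodule.subset_span ?_)
  rw [Finset.mem_filter] at ht
  have htn : (t : ℕ) < n := hlt t ht.1
  have hf1 := f1 hp2 htn hD ht.2
  have hE : ∀ i ∈ b.1.erase t, (i : ℕ) < n := fun i hi => hlt i (Finset.mem_of_mem_erase hi)
  have hlm : Fin.last n ∉ b.1.erase t := last_not_mem hE
  refine ⟨((insert (Fin.last n) (b.1.erase t), b.2 + p ^ (t : ℕ) - p ^ n) : Idx n), ?_, ?_, rfl⟩
  · have hsplit : (∑ i ∈ b.1.erase t, (2 * (p : ℤ) ^ (i : ℕ) - 1)) +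
        (2 * (p : ℤ) ^ (t : ℕ) - 1) = ∑ i ∈ b.1, (2 * (p : ℤ) ^ (i : ℕ) - 1) :=
      Finset.sum_erase_add _ _ ht.1
    show (∑ i ∈ insert (Fin.last n) (b.1.erase t), (2 * (p : ℤ) ^ (i : ℕ) - 1)) +
        2 * ((b.2 + p ^ (t : ℕ) - p ^ n : ℕ) : ℤ) = degIdx p n b
    rw [Finset.sum_insert hlm, Fin.val_last]
    have hc : ((b.2 + p ^ (t : ℕ) - p ^ n : ℕ) : ℤ)
        = (b.2 : ℤ) + (p : ℤ) ^ (t : ℕ) - (p : ℤ) ^ n := by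
      push_cast [hf1.1]
      ring
    rw [hc, degIdx]
    linarith [hsplit]
  · show -(((insert (Fin.last n) (b.1.erase t)).card : ℤ)) = wtIdx n b
    have hcard : 1 ≤ b.1.card := Finset.card_pos.2 ⟨t, ht.1⟩
    have hc : (insert (Fin.last n) (b.1.erase t)).card = b.1.card := by
      rw [Finset.card_insert_of_notMem hlm, Finset.card_erase_of_mem ht.1]
      omega
    rw [hc, wtIdx]

lemma xg_apply {b : Idx n} (b' : Idx n) (hb' : ∀ i ∈ b'.1, (i : ℕ) < n) :
    (xg p n b) b' = if b = b' then (1 : ZMod p) else 0 := by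
  rw [xg, Finsupp.add_apply, Finsupp.finset_sum_apply]
  have hz : ∀ t ∈ b.1.filter (fun t : Fin (n + 1) => (b.2 + p ^ (t : ℕ)) / p ^ n % p ≠ 0),
      (((-1 : ZMod p) ^ ((b.1.filter (· < t)).card + b.1.card)) •
        Finsupp.single ((insert (Fin.last n) (b.1.erase t), b.2 + p ^ (t : ℕ) - p ^ n) : Idx n)
          (1 : ZMod p)) b' = 0 := by
    intro t _
    rw [Finsupp.smul_apply, Finsupp.single_apply, if_neg, smul_zero]
    intro he
    have hl : Fin.last n ∈ b'.1 := by
      have h1 : insert (Fin.last n) (b.1.erase t) = b'.1 := (Prod.ext_iff.1 he).1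
      rw [← h1]
      exact Finset.mem_insert_self _ _
    have := hb' _ hl
    rw [Fin.val_last] at this
    omega
  rw [Finset.sum_eq_zero hz, add_zero, Finsupp.single_apply]

end Constr2


/-- For every pair of integers `(d, w)`, the `𝔽_p`-dimension of the bidegree-`(d, w)`
homogeneous component of `K` equals the number of pairs `(S, k)` with
`S ⊆ {0, 1, …, n−1}`, `k ≥ 0` with remainder modulo `p^{n+1}` at most `p^n − 1`,
such that `Σ_{i∈S}(2p^i − 1) + 2k = d` and `−|S| = w`. -/
theorem dim_K_component (p n : ℕ) (hp : p.Prime) (hn : 1 ≤ n) (d w : ℤ) :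
    Module.finrank (ZMod p) ↥(Kker p n ⊓ Acomp p n d w) =
      Set.ncard {q : Idx n | (∀ i ∈ q.1, (i : ℕ) < n) ∧
        q.2 % p ^ (n + 1) ≤ p ^ n - 1 ∧ degIdx p n q = d ∧ wtIdx n q = w} := by
  classical
  haveI := Fact.mk hp
  have hp2 := hp.two_le
  set T : Set (Idx n) := {q : Idx n | (∀ i ∈ q.1, (i : ℕ) < n) ∧
        q.2 % p ^ (n + 1) ≤ p ^ n - 1 ∧ degIdx p n q = d ∧ wtIdx n q = w} with hT
  have hTfin : T.Finite := by
    apply Set.Finite.subset (Finset.finite_toSet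
      ((Finset.univ : Finset (Finset (Fin (n + 1)))) ×ˢ Finset.Iic d.toNat))
    rintro q ⟨h1, h2, h3, h4⟩
    simp only [Finset.coe_product, Set.mem_prod, Finset.mem_coe, Finset.mem_Iic,
      Finset.mem_univ, Finset.coe_univ, Set.mem_univ, true_and]
    have hnn : (0 : ℤ) ≤ ∑ i ∈ q.1, (2 * (p : ℤ) ^ (i : ℕ) - 1) := by
      refine Finset.sum_nonneg fun i _ => ?_
      have h0 : (0 : ℤ) < (p : ℤ) ^ (i : ℕ) := by positivity
      have h1 : (1 : ℤ) ≤ (p : ℤ) ^ (i : ℕ) := h0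
      linarith
    have h2k : 2 * (q.2 : ℤ) ≤ d := by
      rw [← h3, degIdx]
      linarith
    have hq0 : (0 : ℤ) ≤ (q.2 : ℤ) := Int.natCast_nonneg _
    have hd0 : (0 : ℤ) ≤ d := by linarith
    rw [Int.le_toNat hd0]
    linarith
  set G := hTfin.toFinset with hG
  have hmemG : ∀ b : Idx n, b ∈ G ↔ ((∀ i ∈ b.1, (i : ℕ) < n) ∧
      b.2 % p ^ (n + 1) ≤ p ^ n - 1 ∧ degIdx p n b = d ∧ wtIdx n b = w) := fun b => by
    rw [hG, Set.Finite.mem_toFinset]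
    rfl
  let π : ↥(Kker p n ⊓ Acomp p n d w) →ₗ[ZMod p] (↥G → ZMod p) :=
    (LinearMap.pi fun g : ↥G => Finsupp.lapply (g : Idx n)).comp (Submodule.subtype _)
  have hπinj : Function.Injective π := by
    rw [← LinearMap.ker_eq_bot, LinearMap.ker_eq_bot']
    intro z hz
    apply Subtype.ext
    have hz' : ∀ g : ↥G, (z : A p n) (g : Idx n) = 0 := fun g => congrFun hz g
    refine key_inj hp z.2 ?_
    intro b hb1 hb2 hb3 hb4
    have hbG : b ∈ G := (hmemG b).2 ⟨hb1, (good_iff hp2 b.2).2 hb2, hb3, hb4⟩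
    exact hz' ⟨b, hbG⟩
  have hπsurj : Function.Surjective π := by
    intro f
    have hmem : ∀ g : ↥G, xg p n (g : Idx n) ∈ Kker p n ⊓ Acomp p n d w := by
      intro g
      have hgT := (hmemG _).1 g.2
      have hD : (g : Idx n).2 / p ^ n % p = 0 := (good_iff hp2 _).1 hgT.2.1
      constructor
      · exact ⟨LinearMap.mem_ker.2 (xg_cap hp hgT.1 hD),
          LinearMap.mem_ker.2 (by
            rw [LinearMap.comp_apply]
            exact xg_capsigma hp hgT.1 hD)⟩
      · have hm := xg_mem_Acomp hp hgT.1 hD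
        rwa [hgT.2.2.1, hgT.2.2.2] at hm
    refine ⟨⟨∑ g ∈ G.attach, f g • xg p n (g : Idx n),
      Submodule.sum_mem _ fun g _ => Submodule.smul_mem _ _ (hmem g)⟩, ?_⟩
    funext g
    show (∑ g' ∈ G.attach, f g' • xg p n ((g' : Idx n))) (g : Idx n) = f g
    rw [Finsupp.finset_sum_apply]
    have hterm : ∀ g' : ↥G, (f g' • xg p n ((g' : Idx n))) (g : Idx n)
        = f g' * (if (g' : Idx n) = (g : Idx n) then (1 : ZMod p) else 0) := by
      intro g'
      rw [Finsupp.smul_apply, xg_apply _ ((hmemG _).1 g.2).1, smul_eq_mul]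
    calc (∑ g' ∈ G.attach, (f g' • xg p n ((g' : Idx n))) (g : Idx n))
        = ∑ g' ∈ G.attach, f g' * (if (g' : Idx n) = (g : Idx n) then (1 : ZMod p) else 0) :=
          Finset.sum_congr rfl fun g' _ => hterm g'
      _ = f g := by
          rw [Finset.sum_eq_single g]
          · rw [if_pos rfl, mul_one]
          · intro g' _ hne
            rw [if_neg (fun he => hne (Subtype.ext he)), mul_zero]
          · intro habs
            exact absurd (Finset.mem_attach _ _) habs
  have e := LinearEquiv.ofBijective π ⟨hπinj, hπsurj⟩
  rw [e.finrank_eq, Module.finrank_pi, Fintype.card_coe,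
    Set.ncard_eq_toFinset_card T hTfin]
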